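/- arXiv:2203.11895 — 6 statements merged into one kernel-verified Lean document; each statement's English description precedes it below -/
import Mathlib

section
/- Let (X,d) be a complete metric space and (f_i)_{i∈I} a finite family of continuous self-maps of X such that there exists C ∈ [0,1) with d(f_i(y), f_i(z)) ≤ C·d(y,z) for all i ∈ I, all x ∈ X, and all y,z in the orbit O(x). Then the associated fractal operator F(K) = ⋃_{i∈I} f_i(K) on the space of nonempty compact subsets of X with the Hausdorff metric is a weakly Picard operator: for every compact K, the sequence F^[n](K) converges in the Hausdorff metric and its limit is a fixed point of F. -/
/-!
Every point of `F^[n] K` is the image of a point of `K` under a word of length `n`, and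
`F^[n+1] K = F^[n] (F K)`. A point `x ∈ K` and a point `f i x ∈ F K` lie on the orbit of `x`, so
applying the same word to both contracts their distance by `C ^ n`; hence
`h(F^[n] K, F^[n+1] K) ≤ C ^ n * diam (K ∪ F K)`. The iterates are therefore Cauchy in the complete
space of nonempty compacts, and since `F` is continuous there, their limit is a fixed point.
-/

open Metric Filter Topology Set

/-- The orbit of a point `x` under the family of maps `f i`:
`x` together with all images of `x` under finite compositions of the `f i`. -/
def orbitIFS {X I : Type*} (f : I → X → X) (x : X) : Set X :=
  ⋃ l : List I, {l.foldr (fun i y => f i y) x}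

/-- The fractal (Hutchinson–Barnsley) operator `K ↦ ⋃ i, f i '' K`. -/
def fractalOp {X I : Type*} (f : I → X → X) (K : Set X) : Set X :=
  ⋃ i, f i '' K

/-- Image of a fuzzy set under a map: `f(u)(y) = sup_{x ∈ f⁻¹ y} u x` (0 if empty). -/
noncomputable def fuzzyImage {X : Type*} (g : X → X) (u : X → ℝ) : X → ℝ :=
  fun y => sSup (u '' (g ⁻¹' {y}))

/-- The fuzzy Hutchinson–Barnsley operator `Z(u) = ∨ i, ρ i (f i (u))`. -/
noncomputable def Zop {X I : Type*} (f : I → X → X) (ρ : I → ℝ → ℝ) (u : X → ℝ) : X → ℝ :=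
  fun y => ⨆ i, ρ i (fuzzyImage (f i) u y)

/-- The metric `d_∞(u,v) = sup_{α ∈ (0,1]} h([u]^α, [v]^α)`. -/
noncomputable def dInfty {X : Type*} [MetricSpace X] (u v : X → ℝ) : ℝ :=
  ⨆ α : Ioc (0:ℝ) 1, hausdorffDist {x | (α:ℝ) ≤ u x} {x | (α:ℝ) ≤ v x}

/-- The support of a fuzzy set: the closure of `{x | 0 < u x}`. -/
def fsupp {X : Type*} [MetricSpace X] (u : X → ℝ) : Set X := closure {x | 0 < u x}

/-- The crisp fuzzy point `δ_s`. -/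
def fdelta {X : Type*} [DecidableEq X] (s : X) : X → ℝ := fun t => if t = s then 1 else 0

/-- `u^x` : the restriction of `u` to the closure of the orbit of `w` (zero outside). -/
noncomputable def restrictO {X I : Type*} [MetricSpace X] (f : I → X → X) (u : X → ℝ)
    (w : X) : X → ℝ :=
  (closure (orbitIFS f w)).indicator u

/-- A normal compactly supported fuzzy set (with values in `[0,1]`). -/
def IsFuzzyN {X : Type*} [MetricSpace X] (u : X → ℝ) : Prop :=
  (∀ x, u x ∈ Icc (0:ℝ) 1) ∧ (∃ x, u x = 1) ∧ IsCompact (fsupp u)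

/-- An upper semicontinuous normal compactly supported fuzzy set: membership in `F*_X`. -/
def IsFuzzyStar {X : Type*} [MetricSpace X] (u : X → ℝ) : Prop :=
  IsFuzzyN u ∧ UpperSemicontinuous u

/-- Membership in `F*_S`: for each point of positive membership there is an orbit
containing it together with a point of membership one. -/
def InFS {X I : Type*} [MetricSpace X] (f : I → X → X) (u : X → ℝ) : Prop :=
  IsFuzzyStar u ∧ ∀ x, 0 < u x → ∃ w y, x ∈ orbitIFS f w ∧ y ∈ orbitIFS f w ∧ u y = 1

/-- The orbital contraction condition. -/
def OrbitalContr {X I : Type*} [MetricSpace X] (f : I → X → X) (C : ℝ) : Prop :=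
  ∀ i x, ∀ y ∈ orbitIFS f x, ∀ z ∈ orbitIFS f x, dist (f i y) (f i z) ≤ C * dist y z

/-- An admissible system of grey level maps. -/
def Admissible {I : Type*} (ρ : I → ℝ → ℝ) : Prop :=
  (∀ i, ρ i 0 = 0) ∧ (∀ i, MonotoneOn (ρ i) (Icc (0:ℝ) 1)) ∧
  (∀ i, ∀ t ∈ Icc (0:ℝ) 1, ContinuousWithinAt (ρ i) (Ici t) t) ∧
  (∀ i, ∀ t ∈ Icc (0:ℝ) 1, ρ i t ∈ Icc (0:ℝ) 1) ∧ (∃ j, ρ j 1 = 1)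

open TopologicalSpace

section Orbit

variable {X I : Type*} (f : I → X → X)

lemma foldr_mem_orbitIFS (l : List I) (x : X) : l.foldr f x ∈ orbitIFS f x :=
  mem_iUnion.2 ⟨l, rfl⟩

lemma foldr_mem_orbitIFS_of_mem {x y : X} (hy : y ∈ orbitIFS f x) (l : List I) :
    l.foldr f y ∈ orbitIFS f x := by
  obtain ⟨m, rfl⟩ := mem_iUnion.1 hy
  simpa only [← List.foldr_append] using foldr_mem_orbitIFS f (l ++ m) x

lemma mem_iterate_fractalOp {S : Set X} {n : ℕ} {p : X} :
    p ∈ (fractalOp f)^[n] S ↔ ∃ l : List I, l.length = n ∧ ∃ x ∈ S, l.foldr f x = p := by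
  induction n generalizing p with
  | zero => simp [List.length_eq_zero_iff]
  | succ n ih =>
    simp only [Function.iterate_succ_apply', fractalOp, mem_iUnion, mem_image, ih,
      List.length_eq_succ_iff]
    constructor
    · rintro ⟨i, _, ⟨l, rfl, x, hx, rfl⟩, rfl⟩
      exact ⟨i :: l, ⟨i, l, rfl, rfl⟩, x, hx, rfl⟩
    · rintro ⟨_, ⟨i, l, rfl, rfl⟩, x, hx, rfl⟩
      exact ⟨i, _, ⟨l, rfl, x, hx, rfl⟩, rfl⟩

end Orbit

section Contraction

variable {X I : Type*} [MetricSpace X] {f : I → X → X} {C : ℝ}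

lemma OrbitalContr.dist_foldr_le (horb : OrbitalContr f C) (hC0 : 0 ≤ C) {x y z : X}
    (hy : y ∈ orbitIFS f x) (hz : z ∈ orbitIFS f x) (l : List I) :
    dist (l.foldr f y) (l.foldr f z) ≤ C ^ l.length * dist y z := by
  induction l with
  | nil => simp
  | cons i l ih =>
    calc dist (f i (l.foldr f y)) (f i (l.foldr f z))
        ≤ C * dist (l.foldr f y) (l.foldr f z) :=
          horb i x _ (foldr_mem_orbitIFS_of_mem f hy l) _ (foldr_mem_orbitIFS_of_mem f hz l)
      _ ≤ C * (C ^ l.length * dist y z) := by gcongr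
      _ = C ^ (i :: l).length * dist y z := by rw [List.length_cons, pow_succ']; ring

lemma OrbitalContr.exists_dist_iterate_fractalOp_le (horb : OrbitalContr f C) (hC0 : 0 ≤ C)
    {S T : Set X} {r : ℝ}
    (h : ∀ y ∈ S, ∃ z ∈ T, (∃ x, y ∈ orbitIFS f x ∧ z ∈ orbitIFS f x) ∧ dist y z ≤ r)
    (n : ℕ) : ∀ p ∈ (fractalOp f)^[n] S, ∃ q ∈ (fractalOp f)^[n] T, dist p q ≤ C ^ n * r := by
  intro p hp
  obtain ⟨l, rfl, y, hy, rfl⟩ := (mem_iterate_fractalOp f).1 hp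
  obtain ⟨z, hz, ⟨x, hyx, hzx⟩, hyz⟩ := h y hy
  exact ⟨l.foldr f z, (mem_iterate_fractalOp f).2 ⟨l, rfl, z, hz, rfl⟩,
    (horb.dist_foldr_le hC0 hyx hzx l).trans (by gcongr)⟩

lemma OrbitalContr.hausdorffDist_iterate_fractalOp_succ_le [Nonempty I]
    (horb : OrbitalContr f C) (hC0 : 0 ≤ C) {K : Set X}
    (hK : Bornology.IsBounded (K ∪ fractalOp f K)) (n : ℕ) :
    hausdorffDist ((fractalOp f)^[n] K) ((fractalOp f)^[n + 1] K)
      ≤ C ^ n * diam (K ∪ fractalOp f K) := by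
  have hf_mem {i x} (hx : x ∈ K) : f i x ∈ K ∪ fractalOp f K :=
    .inr (mem_iUnion.2 ⟨i, mem_image_of_mem _ hx⟩)
  rw [Function.iterate_succ_apply]
  apply hausdorffDist_le_of_mem_dist (by positivity [diam_nonneg (s := K ∪ fractalOp f K)])
  · refine horb.exists_dist_iterate_fractalOp_le hC0 (fun x hx => ?_) n
    let i := Classical.arbitrary I
    exact ⟨f i x, mem_iUnion.2 ⟨i, mem_image_of_mem _ hx⟩,
      ⟨x, foldr_mem_orbitIFS f [] x, foldr_mem_orbitIFS f [i] x⟩,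
      dist_le_diam_of_mem hK (.inl hx) (hf_mem hx)⟩
  · refine horb.exists_dist_iterate_fractalOp_le hC0 (fun y hy => ?_) n
    obtain ⟨i, x, hx, rfl⟩ := mem_iUnion.1 hy
    exact ⟨x, hx, ⟨x, foldr_mem_orbitIFS f [i] x, foldr_mem_orbitIFS f [] x⟩,
      dist_le_diam_of_mem hK (hf_mem hx) (.inl hx)⟩

end Contraction

section HutchinsonOperator

variable {X I : Type*} [TopologicalSpace X] [Fintype I] [Nonempty I] {f : I → X → X}

def hutchinsonOp (hf : ∀ i, Continuous (f i)) (K : NonemptyCompacts X) : NonemptyCompacts X :=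
  Finset.univ.sup' Finset.univ_nonempty fun i => K.map (f i) (hf i)

lemma coe_hutchinsonOp (hf : ∀ i, Continuous (f i)) (K : NonemptyCompacts X) :
    (hutchinsonOp hf K : Set X) = fractalOp f K := by
  rw [hutchinsonOp, Finset.apply_sup'_eq_sup'_comp _ _ NonemptyCompacts.coe_sup]
  simp [Finset.sup'_eq_sup, Finset.sup_eq_iSup, fractalOp]

lemma continuous_hutchinsonOp (hf : ∀ i, Continuous (f i)) : Continuous (hutchinsonOp hf) :=
  Continuous.finset_sup'_apply _ fun i _ => (hf i).nonemptyCompacts_map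

end HutchinsonOperator

/-- the fractal operator of an orbital IFS is weakly Picard on
nonempty compact sets with the Hausdorff metric. -/
theorem stmt0 {X I : Type*} [MetricSpace X] [CompleteSpace X] [Finite I] [Nonempty I]
    (f : I → X → X) (hcont : ∀ i, Continuous (f i))
    (C : ℝ) (hC0 : 0 ≤ C) (hC1 : C < 1) (horb : OrbitalContr f C)
    (K : Set X) (hKcp : IsCompact K) (hKne : K.Nonempty) :
    ∃ A : Set X, IsCompact A ∧ A.Nonempty ∧ fractalOp f A = A ∧
      Tendsto (fun n => hausdorffDist ((fractalOp f)^[n] K) A) atTop (nhds 0) := by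
  cases nonempty_fintype I
  set T := hutchinsonOp hcont
  set K₀ : NonemptyCompacts X := ⟨⟨K, hKcp⟩, hKne⟩
  have hcoe (n : ℕ) : (T^[n] K₀ : Set X) = (fractalOp f)^[n] K :=
    Function.Semiconj.iterate_right (coe_hutchinsonOp hcont) n K₀
  have hbdd : Bornology.IsBounded (K ∪ fractalOp f K) :=
    (hKcp.union (coe_hutchinsonOp hcont K₀ ▸ (T K₀).isCompact)).isBounded
  have hstep (n : ℕ) : dist (T^[n] K₀) (T^[n + 1] K₀) ≤ diam (K ∪ fractalOp f K) * C ^ n := by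
    rw [NonemptyCompacts.dist_eq, hcoe, hcoe, mul_comm]
    exact horb.hausdorffDist_iterate_fractalOp_succ_le hC0 hbdd n
  obtain ⟨A, hA⟩ := cauchySeq_tendsto_of_complete (cauchySeq_of_le_geometric C _ hC1 hstep)
  have hfix : T A = A :=
    isFixedPt_of_tendsto_iterate hA (continuous_hutchinsonOp hcont).continuousAt
  refine ⟨A, A.isCompact, A.nonempty, by rw [← coe_hutchinsonOp hcont]; exact congrArg _ hfix, ?_⟩
  simpa only [NonemptyCompacts.dist_eq, hcoe] using tendsto_iff_dist_tendsto_zero.1 hA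
end

section
/- Let (X,d) be a complete metric space and (f_i)_{i∈I} an orbital iterated function system with contraction constant C ∈ [0,1). For any x_1, x_2 ∈ X with O(x_1) ∩ O(x_2) ≠ ∅, the limit attractors coincide: A_{x_1} = A_{x_2}, where A_x denotes the limit in the Hausdorff metric of F^[n]({x}) with F the fractal operator K ↦ ⋃_{i∈I} f_i(K). -/
open Metric Filter Topology Set

section Aux

variable {X I : Type*} [MetricSpace X] (f : I → X → X)

private lemma foldr_mem_orbit (l : List I) (x : X) :
    l.foldr (fun i y => f i y) x ∈ orbitIFS f x :=
  Set.mem_iUnion.2 ⟨l, rfl⟩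

private lemma foldr_mem_orbit_of_mem {z x : X} (hz : z ∈ orbitIFS f x) (l : List I) :
    l.foldr (fun i y => f i y) z ∈ orbitIFS f x := by
  rcases Set.mem_iUnion.1 hz with ⟨l₁, hl₁⟩
  simp only [Set.mem_singleton_iff] at hl₁
  subst hl₁
  rw [← List.foldr_append]
  exact foldr_mem_orbit f _ x

private lemma iterate_eq (n : ℕ) (x : X) :
    (fractalOp f)^[n] {x} = {y | ∃ l : List I, l.length = n ∧ l.foldr (fun i y => f i y) x = y} := by
  induction n with
  | zero =>
    ext y
    simp [List.length_eq_zero_iff, eq_comm]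
  | succ n ih =>
    rw [Function.iterate_succ_apply', ih]
    ext y
    simp only [fractalOp, Set.mem_iUnion, Set.mem_image, Set.mem_setOf_eq]
    constructor
    · rintro ⟨i, p, ⟨l, hl, rfl⟩, rfl⟩
      exact ⟨i :: l, by simp [hl], rfl⟩
    · rintro ⟨l, hl, rfl⟩
      cases l with
      | nil => simp at hl
      | cons i l =>
        exact ⟨i, l.foldr (fun i y => f i y) x, ⟨l, by simpa using hl, rfl⟩, rfl⟩

private lemma dist_foldr {C : ℝ} (hC0 : 0 ≤ C) (horb : OrbitalContr f C)
    (x z : X) (hz : z ∈ orbitIFS f x) (l : List I) :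
    dist (l.foldr (fun i y => f i y) x) (l.foldr (fun i y => f i y) z)
      ≤ C ^ l.length * dist x z := by
  induction l with
  | nil => simp
  | cons i l ih =>
    simp only [List.foldr_cons, List.length_cons]
    calc dist (f i (l.foldr (fun i y => f i y) x)) (f i (l.foldr (fun i y => f i y) z))
        ≤ C * dist (l.foldr (fun i y => f i y) x) (l.foldr (fun i y => f i y) z) :=
          horb i x _ (foldr_mem_orbit f l x) _ (foldr_mem_orbit_of_mem f hz l)
      _ ≤ C * (C ^ l.length * dist x z) := by
          exact mul_le_mul_of_nonneg_left ih hC0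
      _ = C ^ (l.length + 1) * dist x z := by ring

private lemma iterate_compact [Finite I] (hcont : ∀ i, Continuous (f i)) (n : ℕ) (x : X) :
    IsCompact ((fractalOp f)^[n] {x}) := by
  induction n with
  | zero => exact isCompact_singleton
  | succ n ih =>
    rw [Function.iterate_succ_apply']
    exact isCompact_iUnion fun i => ih.image (hcont i)

private lemma iterate_nonempty [Nonempty I] (n : ℕ) (x : X) :
    ((fractalOp f)^[n] {x}).Nonempty := by
  obtain ⟨i⟩ := ‹Nonempty I›
  rw [iterate_eq]
  exact ⟨(List.replicate n i).foldr (fun i y => f i y) x, List.replicate n i, by simp, rfl⟩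

private lemma hd_iterate {C : ℝ} (hC0 : 0 ≤ C) (horb : OrbitalContr f C)
    (x z : X) (hz : z ∈ orbitIFS f x) (n : ℕ) :
    hausdorffDist ((fractalOp f)^[n] {x}) ((fractalOp f)^[n] {z}) ≤ C ^ n * dist x z := by
  have hr : 0 ≤ C ^ n * dist x z := mul_nonneg (pow_nonneg hC0 n) dist_nonneg
  apply hausdorffDist_le_of_mem_dist hr
  · intro p hp
    rw [iterate_eq] at hp
    rcases hp with ⟨l, hl, rfl⟩
    refine ⟨l.foldr (fun i y => f i y) z, ?_, ?_⟩
    · rw [iterate_eq]; exact ⟨l, hl, rfl⟩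
    · simpa [hl] using dist_foldr f hC0 horb x z hz l
  · intro q hq
    rw [iterate_eq] at hq
    rcases hq with ⟨l, hl, rfl⟩
    refine ⟨l.foldr (fun i y => f i y) x, ?_, ?_⟩
    · rw [iterate_eq]; exact ⟨l, hl, rfl⟩
    · rw [dist_comm]
      simpa [hl] using dist_foldr f hC0 horb x z hz l

end Aux

/-- if the orbits of `x₁` and `x₂` intersect, the attractors coincide. -/
theorem stmt1 {X I : Type*} [MetricSpace X] [CompleteSpace X] [Finite I] [Nonempty I]
    (f : I → X → X) (hcont : ∀ i, Continuous (f i))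
    (C : ℝ) (hC0 : 0 ≤ C) (hC1 : C < 1) (horb : OrbitalContr f C)
    (x₁ x₂ : X) (hx : (orbitIFS f x₁ ∩ orbitIFS f x₂).Nonempty)
    (A₁ A₂ : Set X) (hA₁cp : IsCompact A₁) (hA₁ne : A₁.Nonempty)
    (hA₂cp : IsCompact A₂) (hA₂ne : A₂.Nonempty)
    (hA₁ : Tendsto (fun n => hausdorffDist ((fractalOp f)^[n] {x₁}) A₁) atTop (nhds 0))
    (hA₂ : Tendsto (fun n => hausdorffDist ((fractalOp f)^[n] {x₂}) A₂) atTop (nhds 0)) :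
    A₁ = A₂ := by
  obtain ⟨z, hz₁, hz₂⟩ := hx
  set F := fractalOp f with hF
  -- finiteness of Hausdorff edistances
  have cp : ∀ n (x : X), IsCompact (F^[n] {x}) := iterate_compact f hcont
  have ne : ∀ n (x : X), (F^[n] {x}).Nonempty := iterate_nonempty f
  have fin : ∀ n (x : X) (A : Set X), IsCompact A → A.Nonempty →
      EMetric.hausdorffEdist (F^[n] {x}) A ≠ ⊤ := fun n x A hAc hAn =>
    hausdorffEdist_ne_top_of_nonempty_of_bounded (ne n x) hAn (cp n x).isBounded hAc.isBounded
  have fin2 : ∀ n (x y : X), EMetric.hausdorffEdist (F^[n] {x}) (F^[n] {y}) ≠ ⊤ := fun n x y =>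
    hausdorffEdist_ne_top_of_nonempty_of_bounded (ne n x) (ne n y)
      (cp n x).isBounded (cp n y).isBounded
  -- the key bound
  have key : ∀ n, hausdorffDist A₁ A₂ ≤
      hausdorffDist (F^[n] {x₁}) A₁ + C ^ n * dist x₁ z + C ^ n * dist z x₂
        + hausdorffDist (F^[n] {x₂}) A₂ := by
    intro n
    have h1 : hausdorffDist A₁ (F^[n] {x₁}) = hausdorffDist (F^[n] {x₁}) A₁ :=
      hausdorffDist_comm
    have t1 : hausdorffDist A₁ A₂ ≤
        hausdorffDist A₁ (F^[n] {x₁}) + hausdorffDist (F^[n] {x₁}) A₂ :=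
      hausdorffDist_triangle (by rw [EMetric.hausdorffEdist_comm]; exact fin n x₁ A₁ hA₁cp hA₁ne)
    have t2 : hausdorffDist (F^[n] {x₁}) A₂ ≤
        hausdorffDist (F^[n] {x₁}) (F^[n] {z}) + hausdorffDist (F^[n] {z}) A₂ :=
      hausdorffDist_triangle (fin2 n x₁ z)
    have t3 : hausdorffDist (F^[n] {z}) A₂ ≤
        hausdorffDist (F^[n] {z}) (F^[n] {x₂}) + hausdorffDist (F^[n] {x₂}) A₂ :=
      hausdorffDist_triangle (fin2 n z x₂)
    have b1 : hausdorffDist (F^[n] {x₁}) (F^[n] {z}) ≤ C ^ n * dist x₁ z :=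
      hd_iterate f hC0 horb x₁ z hz₁ n
    have b2 : hausdorffDist (F^[n] {z}) (F^[n] {x₂}) ≤ C ^ n * dist z x₂ := by
      rw [hausdorffDist_comm, dist_comm]
      exact hd_iterate f hC0 horb x₂ z hz₂ n
    rw [h1] at t1
    linarith
  -- the RHS tends to 0
  have hpow : Tendsto (fun n : ℕ => C ^ n) atTop (nhds 0) :=
    tendsto_pow_atTop_nhds_zero_of_lt_one hC0 hC1
  have hrhs : Tendsto (fun n => hausdorffDist (F^[n] {x₁}) A₁ + C ^ n * dist x₁ z
      + C ^ n * dist z x₂ + hausdorffDist (F^[n] {x₂}) A₂) atTop (nhds 0) := by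
    have := ((hA₁.add ((hpow.mul_const (dist x₁ z)))).add
      (hpow.mul_const (dist z x₂))).add hA₂
    simpa using this
  have hle : hausdorffDist A₁ A₂ ≤ 0 :=
    ge_of_tendsto hrhs (Eventually.of_forall key)
  have h0 : hausdorffDist A₁ A₂ = 0 := le_antisymm hle hausdorffDist_nonneg
  exact (IsClosed.hausdorffDist_zero_iff_eq hA₁cp.isClosed hA₂cp.isClosed
    (hausdorffEdist_ne_top_of_nonempty_of_bounded hA₁ne hA₂ne
      hA₁cp.isBounded hA₂cp.isBounded)).1 h0
end

section
/- Let (X,d) be a complete metric space and (f_i)_{i∈I} an orbital iterated function system. For every x ∈ X, the closure of the orbit of x satisfies cl(O(x)) = O(x) ∪ A_x, where A_x is the limit in the Hausdorff metric of F^[n]({x}) for the fractal operator F(K) = ⋃_{i∈I} f_i(K). -/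
open Metric Filter Topology Set

section Aux

variable {X I : Type*} (f : I → X → X)

lemma foldr_mem_iter (x : X) (l : List I) :
    l.foldr (fun i y => f i y) x ∈ (fractalOp f)^[l.length] {x} := by
  induction l with
  | nil => simp
  | cons i l ih =>
    rw [List.length_cons, Function.iterate_succ']
    exact Set.mem_iUnion.2 ⟨i, Set.mem_image_of_mem _ ih⟩

lemma exists_list_of_mem_iter (x : X) :
    ∀ n, ∀ y ∈ (fractalOp f)^[n] {x},
      ∃ l : List I, l.length = n ∧ l.foldr (fun i y => f i y) x = y := by
  intro n
  induction n with
  | zero => intro y hy; exact ⟨[], rfl, (by simpa using hy.symm)⟩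
  | succ n ih =>
    intro y hy
    rw [Function.iterate_succ'] at hy
    obtain ⟨i, z, hz, rfl⟩ : ∃ i z, z ∈ (fractalOp f)^[n] {x} ∧ f i z = y := by
      simpa [fractalOp] using hy
    obtain ⟨l, hl, rfl⟩ := ih z hz
    exact ⟨i :: l, by simp [hl], rfl⟩

lemma orbit_eq_iUnion_iter (x : X) :
    orbitIFS f x = ⋃ n, (fractalOp f)^[n] {x} := by
  ext y
  simp only [orbitIFS, Set.mem_iUnion, Set.mem_singleton_iff]
  constructor
  · rintro ⟨l, rfl⟩
    exact ⟨l.length, foldr_mem_iter f x l⟩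
  · rintro ⟨n, hy⟩
    obtain ⟨l, -, rfl⟩ := exists_list_of_mem_iter f x n y hy
    exact ⟨l, rfl⟩

lemma iter_finite [Finite I] (x : X) (n : ℕ) :
    ((fractalOp f)^[n] {x}).Finite := by
  induction n with
  | zero => simp
  | succ n ih =>
    rw [Function.iterate_succ']
    exact Set.finite_iUnion fun i => ih.image _

lemma iter_nonempty [Nonempty I] (x : X) (n : ℕ) :
    ((fractalOp f)^[n] {x}).Nonempty := by
  induction n with
  | zero => simp
  | succ n ih =>
    rw [Function.iterate_succ']
    obtain ⟨i⟩ := ‹Nonempty I›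
    exact ⟨f i ih.choose, Set.mem_iUnion.2 ⟨i, Set.mem_image_of_mem _ ih.choose_spec⟩⟩

end Aux

/-- `cl(O(x)) = O(x) ∪ A_x`. -/
theorem stmt2 {X I : Type*} [MetricSpace X] [CompleteSpace X] [Finite I] [Nonempty I]
    (f : I → X → X) (hcont : ∀ i, Continuous (f i))
    (C : ℝ) (hC0 : 0 ≤ C) (hC1 : C < 1) (horb : OrbitalContr f C)
    (x : X) (Ax : Set X) (hAxcp : IsCompact Ax) (hAxne : Ax.Nonempty)
    (hAx : Tendsto (fun n => hausdorffDist ((fractalOp f)^[n] {x}) Ax) atTop (nhds 0)) :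
    closure (orbitIFS f x) = orbitIFS f x ∪ Ax := by
  set S : ℕ → Set X := fun n => (fractalOp f)^[n] {x} with hS
  have horbit : orbitIFS f x = ⋃ n, S n := orbit_eq_iUnion_iter f x
  have hfin : ∀ n, (S n).Finite := iter_finite f x
  have hne : ∀ n, (S n).Nonempty := iter_nonempty f x
  have hone : orbitIFS f x ⊆ orbitIFS f x := subset_rfl
  have hornne : (orbitIFS f x).Nonempty := ⟨x, Set.mem_iUnion.2 ⟨[], rfl⟩⟩
  have hedist : ∀ n, EMetric.hausdorffEdist (S n) Ax ≠ ⊤ := fun n =>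
    Metric.hausdorffEdist_ne_top_of_nonempty_of_bounded (hne n) hAxne
      (hfin n).isBounded hAxcp.isBounded
  apply Set.Subset.antisymm
  · -- closure O ⊆ O ∪ Ax
    intro z hz
    by_cases hzO : z ∈ orbitIFS f x
    · exact Or.inl hzO
    right
    rw [hAxcp.isClosed.mem_iff_infDist_zero hAxne]
    have h0 : 0 ≤ infDist z Ax := infDist_nonneg
    by_contra hne0
    have hpos : 0 < infDist z Ax := lt_of_le_of_ne h0 (Ne.symm hne0)
    set ε := infDist z Ax / 3 with hε
    have hεpos : 0 < ε := by positivity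
    -- find N with hausdorffDist (S n) Ax < ε for n ≥ N
    have := Metric.tendsto_atTop.1 hAx ε hεpos
    obtain ⟨N, hN⟩ := this
    have hNd : ∀ n ≥ N, hausdorffDist (S n) Ax < ε := by
      intro n hn
      have := hN n hn
      rwa [Real.dist_eq, sub_zero, abs_of_nonneg hausdorffDist_nonneg] at this
    -- split the orbit
    have hsplit : orbitIFS f x = (⋃ n ∈ Finset.range N, S n) ∪ ⋃ n, S (n + N) := by
      rw [horbit]
      ext y
      simp only [Set.mem_iUnion, Set.mem_union, Finset.mem_range]
      constructor
      · rintro ⟨n, hy⟩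
        rcases lt_or_ge n N with h | h
        · exact Or.inl ⟨n, h, hy⟩
        · exact Or.inr ⟨n - N, by rwa [Nat.sub_add_cancel h]⟩
      · rintro (⟨n, -, hy⟩ | ⟨n, hy⟩)
        · exact ⟨n, hy⟩
        · exact ⟨n + N, hy⟩
    have hT1fin : (⋃ n ∈ Finset.range N, S n).Finite :=
      Set.Finite.biUnion (Finset.range N).finite_toSet fun n _ => hfin n
    have hzT2 : z ∈ closure (⋃ n, S (n + N)) := by
      rw [hsplit, closure_union, hT1fin.isClosed.closure_eq] at hz
      rcases hz with h | h
      · exact absurd (hsplit ▸ Or.inl h) hzO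
      · exact h
    obtain ⟨w, hwT2, hwd⟩ := Metric.mem_closure_iff.1 hzT2 ε hεpos
    obtain ⟨m, hwm⟩ := Set.mem_iUnion.1 hwT2
    have h1 : infDist z Ax ≤ infDist w Ax + dist z w := infDist_le_infDist_add_dist
    have h2 : infDist w Ax ≤ hausdorffDist (S (m + N)) Ax :=
      infDist_le_hausdorffDist_of_mem hwm (hedist _)
    have h3 : hausdorffDist (S (m + N)) Ax < ε := hNd _ (Nat.le_add_left N m)
    have : infDist z Ax < 2 * ε := by linarith
    rw [hε] at this
    linarith
  · -- O ∪ Ax ⊆ closure O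
    rintro z (hz | hz)
    · exact subset_closure hz
    · rw [Metric.mem_closure_iff]
      intro ε hεpos
      obtain ⟨N, hN⟩ := Metric.tendsto_atTop.1 hAx (ε / 2) (by positivity)
      have hNd : hausdorffDist (S N) Ax < ε / 2 := by
        have := hN N le_rfl
        rwa [Real.dist_eq, sub_zero, abs_of_nonneg hausdorffDist_nonneg] at this
      have h1 : infDist z (S N) ≤ hausdorffDist Ax (S N) :=
        infDist_le_hausdorffDist_of_mem hz (by rw [EMetric.hausdorffEdist_comm]; exact hedist N)
      rw [hausdorffDist_comm] at h1
      have h2 : infDist z (S N) < ε := lt_of_le_of_lt h1 (by linarith)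
      obtain ⟨w, hwS, hwd⟩ := (infDist_lt_iff (hne N)).1 h2
      exact ⟨w, horbit ▸ Set.mem_iUnion.2 ⟨N, hwS⟩, hwd⟩
end

section
/- Let (X,d) be a metric space, (u_j)_{j∈J} a family of fuzzy sets u_j : X → [0,1], each normal and compactly supported, such that: (i) there is a compact set K ⊆ X containing supp u_j for all j; (ii) the pointwise supremum ∨_j u_j is attained as a pointwise maximum; (iii) ∨_j u_j is upper semicontinuous (and normal, compactly supported). Let Z(u) = ∨_{i∈I} ρ_i(f_i(u)) be the fuzzy Hutchinson–Barnsley operator of an orbital fuzzy IFS. Then ∨_{j∈J} Z(u_j) = max_{j∈J} Z(u_j), i.e., the supremum over j of Z(u_j) is attained pointwise as a maximum. -/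
open Metric Filter Topology Set

/-- usc bounded function attains max on nonempty compact set. -/
lemma usc_exists_max {X : Type*} [MetricSpace X] {v : X → ℝ} (hv : UpperSemicontinuous v)
    (hb : ∀ x, v x ≤ 1) {T : Set X} (hT : IsCompact T) (hne : T.Nonempty) :
    ∃ x0 ∈ T, ∀ x ∈ T, v x ≤ v x0 := by
  set M := sSup (v '' T) with hM
  have hbdd : BddAbove (v '' T) := ⟨1, fun z ⟨x, _, hx⟩ => hx ▸ hb x⟩
  have hMub : ∀ x ∈ T, v x ≤ M := fun x hx => le_csSup hbdd ⟨x, hx, rfl⟩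
  set A : ℕ → Set X := fun n => T ∩ {x | M - 1/(n+1) ≤ v x} with hA
  have hTcl : IsClosed T := hT.isClosed
  have hAcl : ∀ n, IsClosed (A n) := fun n =>
    hTcl.inter (hv.isClosed_preimage (M - 1/(n+1)))
  have hAne : ∀ n, (A n).Nonempty := by
    intro n
    have hlt : M - 1/(n+1) < M := by
      have : (0:ℝ) < 1/(n+1) := by positivity
      linarith
    obtain ⟨z, ⟨x, hxT, rfl⟩, hz⟩ := exists_lt_of_lt_csSup ((hne.image v)) hlt
    exact ⟨x, hxT, le_of_lt hz⟩
  have hAdec : ∀ n, A (n+1) ⊆ A n := by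
    intro n x hx
    have hx2 : M - 1/(((n+1:ℕ):ℝ)+1) ≤ v x := hx.2
    refine ⟨hx.1, show M - 1/((n:ℝ)+1) ≤ v x from le_trans ?_ hx2⟩
    have h1 : (1:ℝ)/((n:ℝ)+1+1) ≤ 1/((n:ℝ)+1) := by
      apply one_div_le_one_div_of_le <;> [positivity; linarith]
    have h2 : ((n+1:ℕ):ℝ) + 1 = (n:ℝ) + 1 + 1 := by push_cast; ring
    rw [h2]
    linarith
  have hA0 : IsCompact (A 0) := hT.of_isClosed_subset (hAcl 0) inter_subset_left
  obtain ⟨x0, hx0⟩ := IsCompact.nonempty_iInter_of_sequence_nonempty_isCompact_isClosed A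
    hAdec hAne hA0 hAcl
  simp only [mem_iInter] at hx0
  refine ⟨x0, (hx0 0).1, fun x hx => le_trans (hMub x hx) ?_⟩
  by_contra h
  push_neg at h
  obtain ⟨n, hn⟩ := exists_nat_one_div_lt (sub_pos.2 h)
  have := (hx0 n).2
  simp only [mem_setOf_eq] at this
  linarith

/-- for a suitable family, the supremum of `Z(u_j)` is attained as a
pointwise maximum. -/
theorem stmt4 {X I J : Type*} [MetricSpace X] [CompleteSpace X] [Finite I] [Nonempty I]
    [Nonempty J]
    (f : I → X → X) (hcont : ∀ i, Continuous (f i))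
    (C : ℝ) (hC0 : 0 ≤ C) (hC1 : C < 1) (horb : OrbitalContr f C)
    (ρ : I → ℝ → ℝ) (hρ : Admissible ρ)
    (u : J → X → ℝ) (hu : ∀ j, IsFuzzyN (u j))
    (K : Set X) (hKcp : IsCompact K) (hKsupp : ∀ j, fsupp (u j) ⊆ K)
    (hmax : ∀ y, ∃ j, u j y = ⨆ j', u j' y)
    (hsup : IsFuzzyStar (fun y => ⨆ j, u j y)) :
    ∀ y, ∃ j, Zop f ρ (u j) y = ⨆ j', Zop f ρ (u j') y := by
  intro y
  set v : X → ℝ := fun x => ⨆ j, u j x with hv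
  have hv1 : ∀ x, v x ≤ 1 := fun x => (hsup.1.1 x).2
  have hv0 : ∀ x, 0 ≤ v x := fun x => (hsup.1.1 x).1
  have huv : ∀ j x, u j x ≤ v x := by
    intro j x
    refine le_ciSup (f := fun j => u j x) ⟨1, ?_⟩ j
    rintro z ⟨j', rfl⟩
    exact ((hu j').1 x).2
  have huK : ∀ j x, x ∉ K → u j x = 0 := by
    intro j x hx
    by_contra h
    have h0 : 0 < u j x := lt_of_le_of_ne ((hu j).1 x).1 (Ne.symm h)
    exact hx (hKsupp j (subset_closure h0))
  set t : I → J → ℝ := fun i j => fuzzyImage (f i) (u j) y with ht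
  have ht0 : ∀ i j, 0 ≤ t i j := by
    intro i j
    apply Real.sSup_nonneg
    rintro z ⟨x, -, rfl⟩
    exact ((hu j).1 x).1
  have ht1 : ∀ i j, t i j ≤ 1 := by
    intro i j
    apply Real.sSup_le _ zero_le_one
    rintro z ⟨x, -, rfl⟩
    exact ((hu j).1 x).2
  -- Claim A: the sup over j of t i j is attained
  have claimA : ∀ i, ∃ j, ∀ j', t i j' ≤ t i j := by
    intro i
    set S : Set X := f i ⁻¹' {y} with hS
    have hScl : IsClosed S := isClosed_singleton.preimage (hcont i)
    by_cases hSK : (S ∩ K).Nonempty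
    · obtain ⟨x0, hx0T, hx0max⟩ := usc_exists_max hsup.2 hv1 (hKcp.inter_left hScl) hSK
      obtain ⟨j0, hj0⟩ := hmax x0
      refine ⟨j0, fun j' => ?_⟩
      have h1 : t i j' ≤ v x0 := by
        apply Real.sSup_le _ (hv0 x0)
        rintro z ⟨x, hxS, rfl⟩
        by_cases hxK : x ∈ K
        · exact (huv j' x).trans (hx0max x ⟨hxS, hxK⟩)
        · rw [huK j' x hxK]; exact hv0 x0
      have h2 : v x0 ≤ t i j0 := by
        have hvx0 : v x0 = u j0 x0 := hj0.symm
        rw [hvx0]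
        refine le_csSup ⟨1, ?_⟩ ⟨x0, hx0T.1, rfl⟩
        rintro z ⟨x, -, rfl⟩
        exact ((hu j0).1 x).2
      exact h1.trans h2
    · refine ⟨Classical.arbitrary J, fun j' => ?_⟩
      have h1 : t i j' ≤ 0 := by
        apply Real.sSup_le _ le_rfl
        rintro z ⟨x, hxS, rfl⟩
        rw [huK j' x (fun hxK => hSK ⟨x, hxS, hxK⟩)]
      exact h1.trans (ht0 i _)
  choose g hg using claimA
  set F : I → ℝ := fun i => ρ i (t i (g i)) with hF
  obtain ⟨i0, hi0⟩ := Finite.exists_max F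
  refine ⟨g i0, ?_⟩
  have hρmono := hρ.2.1
  have hZle : ∀ j', Zop f ρ (u j') y ≤ F i0 := by
    intro j'
    show (⨆ i, ρ i (fuzzyImage (f i) (u j') y)) ≤ F i0
    apply ciSup_le
    intro i
    calc ρ i (t i j') ≤ ρ i (t i (g i)) :=
          hρmono i ⟨ht0 i j', ht1 i j'⟩ ⟨ht0 i (g i), ht1 i (g i)⟩ (hg i j')
      _ = F i := rfl
      _ ≤ F i0 := hi0 i
  have hZge : F i0 ≤ Zop f ρ (u (g i0)) y := by
    have h := le_ciSup (f := fun i => ρ i (t i (g i0)))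
      (Set.Finite.bddAbove (Set.finite_range _)) i0
    exact h
  refine le_antisymm (le_ciSup ⟨F i0, fun z ⟨j', hj'⟩ => hj' ▸ hZle j'⟩ (g i0)) ?_
  exact ciSup_le fun j' => (hZle j').trans hZge
end

section
/- Let (X,d) be a metric space and (u_j)_{j∈J}, (v_j)_{j∈J} families of normal compactly supported fuzzy sets on X such that there is a compact K ⊆ X containing supp u_j and supp v_j for all j, and both pointwise suprema ∨_j u_j and ∨_j v_j are attained pointwise as maxima. Then d_∞(∨_j u_j, ∨_j v_j) ≤ sup_j d_∞(u_j, v_j), where d_∞(u,v) = sup_{α∈(0,1]} h([u]^α, [v]^α). -/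
open Metric Filter Topology Set

/-!
When the pointwise suprema are attained, the `α`-level set of `∨ⱼ uⱼ` is the union of the
`α`-level sets of the `uⱼ`, and the Hausdorff distance between two unions is at most the supremum
of the Hausdorff distances between corresponding pieces. The common compact set `K` keeps every
level set bounded and nonempty for `α ∈ (0,1]`, so all these distances are finite and bounded by
`diam K`; this matters because a real `⨆` over an unbounded family is `0`.
-/

theorem Metric.hausdorffDist_iUnion_le {α : Type*} [PseudoMetricSpace α] {ι : Sort*}
    {s t : ι → Set α} {r : ℝ} (hr : 0 ≤ r) (hfin : ∀ i, hausdorffEDist (s i) (t i) ≠ ⊤)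
    (h : ∀ i, hausdorffDist (s i) (t i) ≤ r) :
    hausdorffDist (⋃ i, s i) (⋃ i, t i) ≤ r :=
  ENNReal.toReal_le_of_le_ofReal hr <| hausdorffEDist_iUnion_le.trans <|
    iSup_le fun i => (ENNReal.le_ofReal_iff_toReal_le (hfin i) hr).2 (h i)

theorem setOf_le_iSup_eq_iUnion {X J β : Type*} [ConditionallyCompleteLattice β]
    {u : J → X → β} (hbdd : ∀ x, BddAbove (range fun j => u j x))
    (hmax : ∀ x, ∃ j, u j x = ⨆ j', u j' x) (a : β) :
    {x | a ≤ ⨆ j, u j x} = ⋃ j, {x | a ≤ u j x} := by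
  ext x
  simp only [mem_ofPred_eq, mem_iUnion]
  constructor
  · intro h
    obtain ⟨j, hj⟩ := hmax x
    exact ⟨j, hj ▸ h⟩
  · rintro ⟨j, hj⟩
    exact hj.trans (le_ciSup (hbdd x) j)

section FuzzySets

variable {X : Type*} [MetricSpace X] {u v : X → ℝ} {K : Set X} {a : ℝ}

theorem bddAbove_range_apply_of_isFuzzyN {J : Type*} {u : J → X → ℝ}
    (hu : ∀ j, IsFuzzyN (u j)) (x : X) : BddAbove (range fun j => u j x) :=
  ⟨1, by rintro _ ⟨j, rfl⟩; exact ((hu j).1 x).2⟩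

theorem IsFuzzyN.setOf_le_nonempty (hu : IsFuzzyN u) (ha : a ≤ 1) : {x | a ≤ u x}.Nonempty :=
  let ⟨x, hx⟩ := hu.2.1
  ⟨x, by simpa [hx] using ha⟩

theorem setOf_le_subset_of_fsupp_subset (hK : fsupp u ⊆ K) (ha : 0 < a) :
    {x | a ≤ u x} ⊆ K :=
  fun _ hx => hK (subset_closure (ha.trans_le hx))

theorem hausdorffEDist_setOf_le_ne_top (hu : IsFuzzyN u) (hv : IsFuzzyN v)
    (hK : Bornology.IsBounded K) (hKu : fsupp u ⊆ K) (hKv : fsupp v ⊆ K) (ha : a ∈ Ioc 0 1) :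
    hausdorffEDist {x | a ≤ u x} {x | a ≤ v x} ≠ ⊤ :=
  hausdorffEDist_ne_top_of_nonempty_of_bounded (hu.setOf_le_nonempty ha.2)
    (hv.setOf_le_nonempty ha.2) (hK.subset (setOf_le_subset_of_fsupp_subset hKu ha.1))
    (hK.subset (setOf_le_subset_of_fsupp_subset hKv ha.1))

theorem hausdorffDist_setOf_le_le_diam (hu : IsFuzzyN u) (hv : IsFuzzyN v)
    (hK : Bornology.IsBounded K) (hKu : fsupp u ⊆ K) (hKv : fsupp v ⊆ K) (ha : a ∈ Ioc 0 1) :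
    hausdorffDist {x | a ≤ u x} {x | a ≤ v x} ≤ diam K := by
  have hsu := setOf_le_subset_of_fsupp_subset hKu ha.1
  have hsv := setOf_le_subset_of_fsupp_subset hKv ha.1
  exact (hausdorffDist_le_diam (hu.setOf_le_nonempty ha.2) (hK.subset hsu)
    (hv.setOf_le_nonempty ha.2) (hK.subset hsv)).trans (diam_mono (union_subset hsu hsv) hK)

theorem hausdorffDist_setOf_le_le_dInfty (hu : IsFuzzyN u) (hv : IsFuzzyN v)
    (hK : Bornology.IsBounded K) (hKu : fsupp u ⊆ K) (hKv : fsupp v ⊆ K) (ha : a ∈ Ioc 0 1) :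
    hausdorffDist {x | a ≤ u x} {x | a ≤ v x} ≤ dInfty u v :=
  le_ciSup (f := fun b : Ioc (0 : ℝ) 1 => hausdorffDist {x | (b : ℝ) ≤ u x} {x | (b : ℝ) ≤ v x})
    ⟨diam K, by
      rintro _ ⟨b, rfl⟩
      exact hausdorffDist_setOf_le_le_diam hu hv hK hKu hKv b.2⟩ ⟨a, ha⟩

theorem dInfty_nonneg (u v : X → ℝ) : 0 ≤ dInfty u v :=
  Real.iSup_nonneg fun _ => hausdorffDist_nonneg

theorem dInfty_le_diam (hu : IsFuzzyN u) (hv : IsFuzzyN v) (hK : Bornology.IsBounded K)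
    (hKu : fsupp u ⊆ K) (hKv : fsupp v ⊆ K) : dInfty u v ≤ diam K :=
  Real.iSup_le (fun b => hausdorffDist_setOf_le_le_diam hu hv hK hKu hKv b.2) diam_nonneg

end FuzzySets

theorem stmt5_general {X J : Type*} [MetricSpace X]
    (u v : J → X → ℝ) (hu : ∀ j, IsFuzzyN (u j)) (hv : ∀ j, IsFuzzyN (v j))
    (K : Set X) (hKcp : IsCompact K)
    (hKu : ∀ j, fsupp (u j) ⊆ K) (hKv : ∀ j, fsupp (v j) ⊆ K)
    (humax : ∀ y, ∃ j, u j y = ⨆ j', u j' y)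
    (hvmax : ∀ y, ∃ j, v j y = ⨆ j', v j' y) :
    dInfty (fun y => ⨆ j, u j y) (fun y => ⨆ j, v j y) ≤ ⨆ j, dInfty (u j) (v j) := by
  have hK := hKcp.isBounded
  have hR : 0 ≤ ⨆ j, dInfty (u j) (v j) := Real.iSup_nonneg fun j => dInfty_nonneg _ _
  have hle_R : ∀ j, dInfty (u j) (v j) ≤ ⨆ j, dInfty (u j) (v j) := le_ciSup ⟨diam K, by
    rintro _ ⟨j, rfl⟩
    exact dInfty_le_diam (hu j) (hv j) hK (hKu j) (hKv j)⟩
  refine Real.iSup_le (fun ⟨a, ha⟩ => ?_) hR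
  simp only [setOf_le_iSup_eq_iUnion (bddAbove_range_apply_of_isFuzzyN hu) humax,
    setOf_le_iSup_eq_iUnion (bddAbove_range_apply_of_isFuzzyN hv) hvmax]
  exact hausdorffDist_iUnion_le hR
    (fun j => hausdorffEDist_setOf_le_ne_top (hu j) (hv j) hK (hKu j) (hKv j) ha)
    fun j => (hausdorffDist_setOf_le_le_dInfty (hu j) (hv j) hK (hKu j) (hKv j) ha).trans (hle_R j)

/-- `d_∞(∨ u_j, ∨ v_j) ≤ sup_j d_∞(u_j, v_j)`. -/
theorem stmt5 {X J : Type*} [MetricSpace X] [Nonempty J]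
    (u v : J → X → ℝ) (hu : ∀ j, IsFuzzyN (u j)) (hv : ∀ j, IsFuzzyN (v j))
    (K : Set X) (hKcp : IsCompact K)
    (hKu : ∀ j, fsupp (u j) ⊆ K) (hKv : ∀ j, fsupp (v j) ⊆ K)
    (humax : ∀ y, ∃ j, u j y = ⨆ j', u j' y)
    (hvmax : ∀ y, ∃ j, v j y = ⨆ j', v j' y) :
    dInfty (fun y => ⨆ j, u j y) (fun y => ⨆ j, v j y) ≤ ⨆ j, dInfty (u j) (v j) :=
  stmt5_general u v hu hv K hKcp hKu hKv humax hvmax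
end

section
/- Let S_Z = ((X,d),(f_i)_{i∈I},(ρ_i)_{i∈I}) be an orbital fuzzy iterated function system, u ∈ F*_S, and x ∈ [u]^* with associated points w_x, y_x ∈ X such that x, y_x ∈ O(w_x) and u(y_x) = 1. Then for every s in the closure of O(w_x), the sequence Z^[n](δ_s) converges in d_∞ to u_x := lim_n Z^[n](u^x). In particular lim_n Z^[n](δ_x) = u_x. -/
open Metric Filter Topology Set

/-! On fuzzy sets whose positive part lies in `K = cl O(w)`, the operator `Z` contracts `d_∞`
by the orbital constant `C`. A point `y` of the `α`-level of `Z a` is `f i z` with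
`α ≤ ρ i (a z)`, the supremum over the fibre being attained by upper semicontinuity and
compactness; if `z'` is a nearest point to `z` of the `a z`-level of `b`, then `f i z'` lies in
the `α`-level of `Z b` and `dist y (f i z') ≤ C * d_∞(a, b)`. Both `δ_s` (for `s ∈ K`) and `u^x`
are such fuzzy sets and `Z` preserves the class, so
`d_∞(Z^n δ_s, u_x) ≤ C^n d_∞(δ_s, u^x) + d_∞(Z^n u^x, u_x) → 0`. -/

section Orbit

variable {X I : Type*} {f : I → X → X} {w : X}

lemma apply_mem_orbitIFS (i : I) {z : X} (hz : z ∈ orbitIFS f w) : f i z ∈ orbitIFS f w := by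
  obtain ⟨l, rfl⟩ : ∃ l : List I, l.foldr (fun i y => f i y) w = z := by
    simpa [orbitIFS, eq_comm] using hz
  exact mem_iUnion.2 ⟨i :: l, rfl⟩

lemma mapsTo_closure_orbitIFS [TopologicalSpace X] {i : I} (hcont : Continuous (f i)) :
    MapsTo (f i) (closure (orbitIFS f w)) (closure (orbitIFS f w)) :=
  MapsTo.closure (fun _ => apply_mem_orbitIFS i) hcont

lemma OrbitalContr.dist_le_of_mem_closure [MetricSpace X] {C : ℝ} (horb : OrbitalContr f C)
    {i : I} (hcont : Continuous (f i)) {y z : X} (hy : y ∈ closure (orbitIFS f w))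
    (hz : z ∈ closure (orbitIFS f w)) : dist (f i y) (f i z) ≤ C * dist y z := by
  have hclosed : IsClosed {p : X × X | dist (f i p.1) (f i p.2) ≤ C * dist p.1 p.2} :=
    isClosed_le ((hcont.comp continuous_fst).dist (hcont.comp continuous_snd))
      (continuous_const.mul continuous_dist)
  have hyz : (y, z) ∈ closure (orbitIFS f w ×ˢ orbitIFS f w) := by
    rw [closure_prod_eq]; exact ⟨hy, hz⟩
  exact closure_minimal (fun p hp => horb i w p.1 hp.1 p.2 hp.2) hclosed hyz

end Orbit

section Semicontinuity

variable {X : Type*} [TopologicalSpace X]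

lemma UpperSemicontinuous.comp_rightContinuous {φ : ℝ → ℝ} {v : X → ℝ}
    (hv : UpperSemicontinuous v) (hv01 : ∀ x, v x ∈ Icc (0:ℝ) 1)
    (hmono : MonotoneOn φ (Icc 0 1)) (hφ : ∀ t ∈ Icc (0:ℝ) 1, ContinuousWithinAt φ (Ici t) t) :
    UpperSemicontinuous fun x => φ (v x) := by
  intro x c hc
  obtain ⟨b, hb, hIco⟩ := mem_nhdsGE_iff_exists_Ico_subset.1 ((hφ _ (hv01 x)) (Iio_mem_nhds hc))
  filter_upwards [hv x b hb] with y hy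
  rcases le_or_gt (v y) (v x) with hle | hlt
  · exact (hmono (hv01 y) (hv01 x) hle).trans_lt hc
  · exact hIco ⟨hlt.le, hy⟩

lemma upperSemicontinuous_ciSup_of_finite {ι : Type*} [Finite ι] {g : ι → X → ℝ}
    (hg : ∀ i, UpperSemicontinuous (g i)) : UpperSemicontinuous fun x => ⨆ i, g i x := by
  rcases isEmpty_or_nonempty ι with hι | hι
  · simpa only [Real.iSup_of_isEmpty] using upperSemicontinuous_const
  intro x c hc
  have hlt : ∀ i, ∀ᶠ y in 𝓝 x, g i y < c := fun i =>
    hg i x c ((le_ciSup (finite_range _).bddAbove i).trans_lt hc)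
  filter_upwards [eventually_all.2 hlt] with y hy
  obtain ⟨i, hi⟩ := exists_eq_ciSup_of_finite (f := fun i => g i y)
  exact hi ▸ hy i

end Semicontinuity

lemma exists_le_of_le_ciSup_of_finite {ι : Type*} [Finite ι] {g : ι → ℝ} {α : ℝ} (hα : 0 < α)
    (h : α ≤ ⨆ i, g i) : ∃ i, α ≤ g i := by
  rcases isEmpty_or_nonempty ι with hι | hι
  · rw [Real.iSup_of_isEmpty] at h; linarith
  obtain ⟨i, hi⟩ := exists_eq_ciSup_of_finite (f := g)
  exact ⟨i, hi ▸ h⟩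

section FuzzyImage

variable {X : Type*} {g : X → X} {v : X → ℝ}

lemma fuzzyImage_mem_Icc (g : X → X) (hv : ∀ z, v z ∈ Icc (0:ℝ) 1) (y : X) :
    fuzzyImage g v y ∈ Icc (0:ℝ) 1 :=
  ⟨Real.sSup_nonneg (by rintro _ ⟨z, -, rfl⟩; exact (hv z).1),
    Real.sSup_le (by rintro _ ⟨z, -, rfl⟩; exact (hv z).2) zero_le_one⟩

lemma le_fuzzyImage (g : X → X) (hv : ∀ z, v z ∈ Icc (0:ℝ) 1) (z : X) :
    v z ≤ fuzzyImage g v (g z) :=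
  le_csSup ⟨1, by rintro _ ⟨z', -, rfl⟩; exact (hv z').2⟩ ⟨z, rfl, rfl⟩

lemma exists_pos_of_fuzzyImage_pos {y : X} (hpos : 0 < fuzzyImage g v y) :
    ∃ z, g z = y ∧ 0 < v z := by
  have hne : (v '' (g ⁻¹' {y})).Nonempty := by
    by_contra h
    rw [not_nonempty_iff_eq_empty] at h
    simp [fuzzyImage, h] at hpos
  obtain ⟨_, ⟨z, hz, rfl⟩, hvz⟩ := exists_lt_of_lt_csSup hne hpos
  exact ⟨z, hz, hvz⟩

variable [MetricSpace X]

lemma IsFuzzyStar.isClosed_level (hv : IsFuzzyStar v) (α : ℝ) : IsClosed {z | α ≤ v z} :=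
  hv.2.isClosed_preimage α

lemma IsFuzzyStar.isCompact_level (hv : IsFuzzyStar v) {α : ℝ} (hα : 0 < α) :
    IsCompact {z | α ≤ v z} :=
  hv.1.2.2.of_isClosed_subset (hv.isClosed_level α) fun _ hz => subset_closure (hα.trans_le hz)

lemma IsFuzzyStar.level_nonempty (hv : IsFuzzyStar v) {α : ℝ} (hα : α ≤ 1) :
    {z | α ≤ v z}.Nonempty := by
  obtain ⟨y, hy⟩ := hv.1.2.1
  exact ⟨y, show α ≤ v y by rw [hy]; exact hα⟩

/-- A positive supremum over a fibre is attained: the fibre meets the compact support,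
on which the upper semicontinuous `v` has a maximum. -/
lemma IsFuzzyStar.exists_eq_fuzzyImage (hv : IsFuzzyStar v) (hg : Continuous g) {y : X}
    (hpos : 0 < fuzzyImage g v y) : ∃ z, g z = y ∧ v z = fuzzyImage g v y := by
  obtain ⟨z₀, hz₀y, hz₀⟩ := exists_pos_of_fuzzyImage_pos hpos
  have hcpt : IsCompact (g ⁻¹' {y} ∩ fsupp v) :=
    hv.1.2.2.inter_left (isClosed_singleton.preimage hg)
  have hz₀mem : z₀ ∈ g ⁻¹' {y} ∩ fsupp v := ⟨hz₀y, subset_closure hz₀⟩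
  obtain ⟨z, ⟨hzy, -⟩, hmax⟩ := (hv.2.upperSemicontinuousOn _).exists_isMaxOn ⟨z₀, hz₀mem⟩ hcpt
  refine ⟨z, hzy, le_antisymm (hzy ▸ le_fuzzyImage g hv.1.1 z) ?_⟩
  refine csSup_le ⟨v z₀, z₀, hz₀y, rfl⟩ ?_
  rintro _ ⟨z', hz'y, rfl⟩
  rcases le_or_gt (v z') 0 with hle | hlt
  · exact hle.trans (hz₀.le.trans (hmax hz₀mem))
  · exact hmax ⟨hz'y, subset_closure hlt⟩

lemma IsFuzzyStar.level_fuzzyImage (hv : IsFuzzyStar v) (hg : Continuous g) {α : ℝ}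
    (hα : 0 < α) : {y | α ≤ fuzzyImage g v y} = g '' {z | α ≤ v z} := by
  ext y
  constructor
  · intro hy
    obtain ⟨z, hzy, hz⟩ := hv.exists_eq_fuzzyImage hg (hα.trans_le hy)
    exact ⟨z, (hz.symm ▸ hy : α ≤ v z), hzy⟩
  · rintro ⟨z, hz, rfl⟩
    exact le_trans hz (le_fuzzyImage g hv.1.1 z)

lemma IsFuzzyStar.upperSemicontinuous_fuzzyImage (hv : IsFuzzyStar v) (hg : Continuous g) :
    UpperSemicontinuous (fuzzyImage g v) := by
  refine upperSemicontinuous_iff_isClosed_preimage.2 fun α => ?_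
  rcases le_or_gt α 0 with hα | hα
  · convert isClosed_univ
    exact eq_univ_of_forall fun y => hα.trans (fuzzyImage_mem_Icc g hv.1.1 y).1
  · change IsClosed {y | α ≤ fuzzyImage g v y}
    rw [hv.level_fuzzyImage hg hα]
    exact ((hv.isCompact_level hα).image hg).isClosed

end FuzzyImage

section Zop

variable {X I : Type*} {f : I → X → X} {ρ : I → ℝ → ℝ} {v : X → ℝ}

lemma Zop_mem_Icc (hρ : Admissible ρ) (hv : ∀ z, v z ∈ Icc (0:ℝ) 1) (y : X) :
    Zop f ρ v y ∈ Icc (0:ℝ) 1 :=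
  have hρv (i : I) := hρ.2.2.2.1 i _ (fuzzyImage_mem_Icc (f i) hv y)
  ⟨Real.iSup_nonneg fun i => (hρv i).1, Real.iSup_le (fun i => (hρv i).2) zero_le_one⟩

variable [Finite I]

lemma le_Zop {y : X} {α : ℝ} (i : I) (h : α ≤ ρ i (fuzzyImage (f i) v y)) :
    α ≤ Zop f ρ v y :=
  h.trans (le_ciSup (f := fun i => ρ i (fuzzyImage (f i) v y)) (finite_range _).bddAbove i)

lemma exists_fuzzyImage_pos_of_le_Zop (hρ : Admissible ρ) (hv : ∀ z, v z ∈ Icc (0:ℝ) 1)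
    {y : X} {α : ℝ} (hα : 0 < α) (h : α ≤ Zop f ρ v y) :
    ∃ i, α ≤ ρ i (fuzzyImage (f i) v y) ∧ 0 < fuzzyImage (f i) v y := by
  obtain ⟨i, hi⟩ := exists_le_of_le_ciSup_of_finite hα h
  refine ⟨i, hi, (fuzzyImage_mem_Icc (f i) hv y).1.lt_of_ne fun h0 => ?_⟩
  rw [← h0, hρ.1 i] at hi
  exact hα.not_ge hi

lemma setOf_pos_Zop_subset (hρ : Admissible ρ) (hv : ∀ z, v z ∈ Icc (0:ℝ) 1) :
    {y | 0 < Zop f ρ v y} ⊆ ⋃ i, f i '' {z | 0 < v z} := by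
  intro y hy
  obtain ⟨i, -, hpos⟩ := exists_fuzzyImage_pos_of_le_Zop hρ hv hy le_rfl
  obtain ⟨z, hzy, hz⟩ := exists_pos_of_fuzzyImage_pos hpos
  exact mem_iUnion.2 ⟨i, z, hz, hzy⟩

variable [MetricSpace X]

lemma isFuzzyStar_Zop (hv : IsFuzzyStar v) (hcont : ∀ i, Continuous (f i))
    (hρ : Admissible ρ) : IsFuzzyStar (Zop f ρ v) := by
  have hv01 := hv.1.1
  obtain ⟨y₀, hy₀⟩ := hv.1.2.1
  obtain ⟨j, hj⟩ := hρ.2.2.2.2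
  refine ⟨⟨Zop_mem_Icc hρ hv01, ⟨f j y₀, ?_⟩, ?_⟩, ?_⟩
  · have hF : fuzzyImage (f j) v (f j y₀) = 1 :=
      le_antisymm (fuzzyImage_mem_Icc _ hv01 _).2 (hy₀ ▸ le_fuzzyImage _ hv01 y₀)
    exact le_antisymm (Zop_mem_Icc hρ hv01 _).2 (le_Zop j (by rw [hF, hj]))
  · have himage : IsCompact (⋃ i, f i '' fsupp v) :=
      isCompact_iUnion fun i => hv.1.2.2.image (hcont i)
    refine himage.of_isClosed_subset isClosed_closure (closure_minimal ?_ himage.isClosed)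
    exact (setOf_pos_Zop_subset hρ hv01).trans
      (iUnion_mono fun i => image_mono subset_closure)
  · exact upperSemicontinuous_ciSup_of_finite fun i =>
      (hv.upperSemicontinuous_fuzzyImage (hcont i)).comp_rightContinuous
        (fuzzyImage_mem_Icc _ hv01) (hρ.2.1 i) (hρ.2.2.1 i)

end Zop

section DInfty

variable {X : Type*} [MetricSpace X] {a b : X → ℝ}

lemma dInfty_nonneg_s6 (a b : X → ℝ) : 0 ≤ dInfty a b :=
  Real.iSup_nonneg fun _ => hausdorffDist_nonneg

lemma dInfty_comm (a b : X → ℝ) : dInfty a b = dInfty b a := by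
  simp only [dInfty, hausdorffDist_comm]

lemma IsFuzzyStar.hausdorffEDist_level_ne_top (ha : IsFuzzyStar a) (hb : IsFuzzyStar b)
    {α : ℝ} (hα : α ∈ Ioc (0:ℝ) 1) :
    hausdorffEDist {z | α ≤ a z} {z | α ≤ b z} ≠ ⊤ :=
  hausdorffEDist_ne_top_of_nonempty_of_bounded (ha.level_nonempty hα.2) (hb.level_nonempty hα.2)
    (ha.isCompact_level hα.1).isBounded (hb.isCompact_level hα.1).isBounded

lemma IsFuzzyStar.hausdorffDist_level_le_dInfty (ha : IsFuzzyStar a) (hb : IsFuzzyStar b)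
    {α : ℝ} (hα : α ∈ Ioc (0:ℝ) 1) :
    hausdorffDist {z | α ≤ a z} {z | α ≤ b z} ≤ dInfty a b := by
  have hbdd : BddAbove (range fun β : Ioc (0:ℝ) 1 =>
      hausdorffDist {z | (β:ℝ) ≤ a z} {z | (β:ℝ) ≤ b z}) := by
    refine ⟨diam (fsupp a ∪ fsupp b), ?_⟩
    rintro _ ⟨β, rfl⟩
    refine (hausdorffDist_le_diam (ha.level_nonempty β.2.2) (ha.isCompact_level β.2.1).isBounded
      (hb.level_nonempty β.2.2) (hb.isCompact_level β.2.1).isBounded).trans ?_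
    exact diam_mono (union_subset_union (fun _ hz => subset_closure (β.2.1.trans_le hz))
      (fun _ hz => subset_closure (β.2.1.trans_le hz)))
      (ha.1.2.2.union hb.1.2.2).isBounded
  exact le_ciSup hbdd ⟨α, hα⟩

/-- `c` need not be a fuzzy set: if the levels of `b` and `c` are not uniformly close, the
supremum defining `dInfty b c` is the junk value `0`, and then so is `dInfty a c`. -/
lemma IsFuzzyStar.dInfty_triangle (ha : IsFuzzyStar a) (hb : IsFuzzyStar b) (c : X → ℝ) :
    dInfty a c ≤ dInfty a b + dInfty b c := by
  set g : Ioc (0:ℝ) 1 → ℝ := fun α => hausdorffDist {z | (α:ℝ) ≤ a z} {z | (α:ℝ) ≤ c z}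
  set g' : Ioc (0:ℝ) 1 → ℝ := fun α => hausdorffDist {z | (α:ℝ) ≤ b z} {z | (α:ℝ) ≤ c z}
  have hg (α : Ioc (0:ℝ) 1) : g α ≤ dInfty a b + g' α :=
    (hausdorffDist_triangle (ha.hausdorffEDist_level_ne_top hb α.2)).trans
      (add_le_add_left (ha.hausdorffDist_level_le_dInfty hb α.2) _)
  have hg' (α : Ioc (0:ℝ) 1) : g' α ≤ dInfty a b + g α :=
    (hausdorffDist_triangle (hb.hausdorffEDist_level_ne_top ha α.2)).trans
      (add_le_add_left ((hb.hausdorffDist_level_le_dInfty ha α.2).trans_eq (dInfty_comm b a)) _)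
  by_cases hbdd : BddAbove (range g')
  · exact Real.iSup_le (fun α => (hg α).trans (add_le_add_right (le_ciSup hbdd α) _))
      (add_nonneg (dInfty_nonneg_s6 a b) (dInfty_nonneg_s6 b c))
  · have hunbdd : ¬BddAbove (range g) := fun ⟨m, hm⟩ =>
      hbdd ⟨dInfty a b + m, by
        rintro _ ⟨α, rfl⟩
        exact (hg' α).trans (add_le_add_right (hm ⟨α, rfl⟩) _)⟩
    exact (Real.iSup_of_not_bddAbove hunbdd).trans_le
      (add_nonneg (dInfty_nonneg_s6 a b) (dInfty_nonneg_s6 b c))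

end DInfty

section Contraction

variable {X I : Type*} [MetricSpace X] [Finite I] {f : I → X → X} {ρ : I → ℝ → ℝ} {C : ℝ}
  {K : Set X} {a b : X → ℝ}

lemma exists_mem_level_Zop_dist_le (hcont : ∀ i, Continuous (f i)) (hρ : Admissible ρ)
    (hC0 : 0 ≤ C) (hLip : ∀ i, ∀ y ∈ K, ∀ z ∈ K, dist (f i y) (f i z) ≤ C * dist y z)
    (ha : IsFuzzyStar a) (hb : IsFuzzyStar b) (haK : {z | 0 < a z} ⊆ K)
    (hbK : {z | 0 < b z} ⊆ K) {α : ℝ} (hα : α ∈ Ioc (0:ℝ) 1) {y : X}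
    (hy : α ≤ Zop f ρ a y) : ∃ y', α ≤ Zop f ρ b y' ∧ dist y y' ≤ C * dInfty a b := by
  obtain ⟨i, hi, htpos⟩ := exists_fuzzyImage_pos_of_le_Zop hρ ha.1.1 hα.1 hy
  set t := fuzzyImage (f i) a y
  have ht : t ∈ Ioc (0:ℝ) 1 := ⟨htpos, (fuzzyImage_mem_Icc _ ha.1.1 y).2⟩
  obtain ⟨z, rfl, hzt⟩ := ha.exists_eq_fuzzyImage (hcont i) htpos
  have hz : z ∈ {z | t ≤ a z} := hzt.symm.le
  obtain ⟨z', hz', hdist⟩ := (hb.isCompact_level ht.1).exists_infDist_eq_dist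
    (hb.level_nonempty ht.2) z
  have hzz' : dist z z' ≤ dInfty a b :=
    hdist ▸ (infDist_le_hausdorffDist_of_mem hz (ha.hausdorffEDist_level_ne_top hb ht)).trans
      (ha.hausdorffDist_level_le_dInfty hb ht)
  refine ⟨f i z', le_Zop i (hi.trans (hρ.2.1 i (fuzzyImage_mem_Icc _ ha.1.1 _)
    (fuzzyImage_mem_Icc _ hb.1.1 _) (le_trans hz' (le_fuzzyImage _ hb.1.1 z')))), ?_⟩
  exact (hLip i z (haK (ht.1.trans_le hz)) z' (hbK (ht.1.trans_le hz'))).trans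
    (mul_le_mul_of_nonneg_left hzz' hC0)

lemma dInfty_Zop_le (hcont : ∀ i, Continuous (f i)) (hρ : Admissible ρ)
    (hC0 : 0 ≤ C) (hLip : ∀ i, ∀ y ∈ K, ∀ z ∈ K, dist (f i y) (f i z) ≤ C * dist y z)
    (ha : IsFuzzyStar a) (hb : IsFuzzyStar b) (haK : {z | 0 < a z} ⊆ K)
    (hbK : {z | 0 < b z} ⊆ K) : dInfty (Zop f ρ a) (Zop f ρ b) ≤ C * dInfty a b := by
  have hCd : 0 ≤ C * dInfty a b := mul_nonneg hC0 (dInfty_nonneg_s6 a b)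
  refine Real.iSup_le (fun α => hausdorffDist_le_of_mem_dist hCd (fun y hy => ?_)
    (fun y hy => ?_)) hCd
  · exact exists_mem_level_Zop_dist_le hcont hρ hC0 hLip ha hb haK hbK α.2 hy
  · obtain ⟨y', hy', hdist⟩ := exists_mem_level_Zop_dist_le hcont hρ hC0 hLip hb ha hbK haK α.2 hy
    exact ⟨y', hy', by rwa [dInfty_comm]⟩

lemma setOf_pos_Zop_subset_of_mapsTo (hρ : Admissible ρ) (hK : ∀ i, MapsTo (f i) K K)
    (ha : IsFuzzyStar a) (haK : {z | 0 < a z} ⊆ K) : {y | 0 < Zop f ρ a y} ⊆ K :=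
  (setOf_pos_Zop_subset hρ ha.1.1).trans
    (iUnion_subset fun i => ((hK i).mono_left haK).image_subset)

lemma dInfty_iterate_Zop_le (hcont : ∀ i, Continuous (f i)) (hρ : Admissible ρ)
    (hC0 : 0 ≤ C) (hK : ∀ i, MapsTo (f i) K K)
    (hLip : ∀ i, ∀ y ∈ K, ∀ z ∈ K, dist (f i y) (f i z) ≤ C * dist y z)
    (ha : IsFuzzyStar a) (hb : IsFuzzyStar b) (haK : {z | 0 < a z} ⊆ K)
    (hbK : {z | 0 < b z} ⊆ K) (n : ℕ) :
    dInfty ((Zop f ρ)^[n] a) ((Zop f ρ)^[n] b) ≤ C ^ n * dInfty a b := by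
  induction n generalizing a b with
  | zero => simp
  | succ n ih =>
    calc dInfty ((Zop f ρ)^[n] (Zop f ρ a)) ((Zop f ρ)^[n] (Zop f ρ b))
        ≤ C ^ n * dInfty (Zop f ρ a) (Zop f ρ b) :=
          ih (isFuzzyStar_Zop ha hcont hρ) (isFuzzyStar_Zop hb hcont hρ)
            (setOf_pos_Zop_subset_of_mapsTo hρ hK ha haK)
            (setOf_pos_Zop_subset_of_mapsTo hρ hK hb hbK)
      _ ≤ C ^ n * (C * dInfty a b) :=
          mul_le_mul_of_nonneg_left (dInfty_Zop_le hcont hρ hC0 hLip ha hb haK hbK)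
            (pow_nonneg hC0 n)
      _ = C ^ (n + 1) * dInfty a b := by ring

lemma isFuzzyStar_iterate_Zop (hv : IsFuzzyStar a) (hcont : ∀ i, Continuous (f i))
    (hρ : Admissible ρ) (n : ℕ) : IsFuzzyStar ((Zop f ρ)^[n] a) := by
  induction n with
  | zero => exact hv
  | succ n ih => rw [Function.iterate_succ_apply']; exact isFuzzyStar_Zop ih hcont hρ

end Contraction

section FuzzyPoints

lemma setOf_pos_indicator_subset {X : Type*} (K : Set X) (u : X → ℝ) :
    {z | 0 < K.indicator u z} ⊆ K :=
  fun _ hz => by_contra fun h => hz.ne' (indicator_of_notMem h u)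

lemma setOf_pos_fdelta {X : Type*} [DecidableEq X] (s : X) : {z | 0 < fdelta s z} = {s} := by
  ext z
  by_cases h : z = s <;> simp [fdelta, h]

variable {X : Type*} [MetricSpace X]

lemma UpperSemicontinuous.indicator_of_isClosed {K : Set X} {u : X → ℝ}
    (hu : UpperSemicontinuous u) (hu0 : ∀ z, 0 ≤ u z) (hK : IsClosed K) :
    UpperSemicontinuous (K.indicator u) := by
  intro x c hc
  by_cases hx : x ∈ K
  · rw [indicator_of_mem hx] at hc
    filter_upwards [hu x c hc] with y hy
    exact (indicator_le_self' (fun z _ => hu0 z) y).trans_lt hy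
  · rw [indicator_of_notMem hx] at hc
    filter_upwards [hK.isOpen_compl.mem_nhds hx] with y hy
    rwa [indicator_of_notMem hy]

lemma IsFuzzyStar.indicator {K : Set X} {u : X → ℝ} (hu : IsFuzzyStar u) (hK : IsClosed K)
    {y : X} (hyK : y ∈ K) (hy : u y = 1) : IsFuzzyStar (K.indicator u) := by
  refine ⟨⟨fun z => ?_, ⟨y, by rwa [indicator_of_mem hyK]⟩, ?_⟩,
    hu.2.indicator_of_isClosed (fun z => (hu.1.1 z).1) hK⟩
  · by_cases hz : z ∈ K
    · rw [indicator_of_mem hz]; exact hu.1.1 z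
    · rw [indicator_of_notMem hz]; exact ⟨le_rfl, zero_le_one⟩
  · refine hu.1.2.2.of_isClosed_subset isClosed_closure (closure_mono fun z hz => ?_)
    have hzK := setOf_pos_indicator_subset K u hz
    show 0 < u z
    rwa [← indicator_of_mem hzK u]

variable [DecidableEq X]

lemma isFuzzyStar_fdelta (s : X) : IsFuzzyStar (fdelta s) := by
  have hind : fdelta s = ({s} : Set X).indicator fun _ => 1 := by
    ext z; by_cases h : z = s <;> simp [fdelta, h]
  refine ⟨⟨fun z => ?_, ⟨s, if_pos rfl⟩, ?_⟩, ?_⟩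
  · by_cases h : z = s <;> simp [fdelta, h]
  · rw [fsupp, setOf_pos_fdelta, closure_singleton]; exact isCompact_singleton
  · rw [hind]; exact isClosed_singleton.upperSemicontinuous_indicator zero_le_one

end FuzzyPoints

theorem stmt6_general {X I : Type*} [MetricSpace X] [DecidableEq X]
    [Finite I]
    (f : I → X → X) (hcont : ∀ i, Continuous (f i))
    (C : ℝ) (hC0 : 0 ≤ C) (hC1 : C < 1) (horb : OrbitalContr f C)
    (ρ : I → ℝ → ℝ) (hρ : Admissible ρ)
    (u : X → ℝ) (hu : InFS f u)
    (x : X)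
    (wx yx : X) (hxw : x ∈ orbitIFS f wx) (hyw : yx ∈ orbitIFS f wx) (hy1 : u yx = 1)
    (ux : X → ℝ)
    (hux : Tendsto (fun n => dInfty ((Zop f ρ)^[n] (restrictO f u wx)) ux) atTop (nhds 0)) :
    (∀ s ∈ closure (orbitIFS f wx),
      Tendsto (fun n => dInfty ((Zop f ρ)^[n] (fdelta s)) ux) atTop (nhds 0)) ∧
    Tendsto (fun n => dInfty ((Zop f ρ)^[n] (fdelta x)) ux) atTop (nhds 0) := by
  set K := closure (orbitIFS f wx)
  have hK (i : I) : MapsTo (f i) K K := mapsTo_closure_orbitIFS (hcont i)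
  have hLip (i : I) (y) (hy : y ∈ K) (z) (hz : z ∈ K) : dist (f i y) (f i z) ≤ C * dist y z :=
    horb.dist_le_of_mem_closure (hcont i) hy hz
  have hr : IsFuzzyStar (restrictO f u wx) :=
    hu.1.indicator isClosed_closure (subset_closure hyw) hy1
  have hrK : {z | 0 < restrictO f u wx z} ⊆ K := setOf_pos_indicator_subset K u
  have hδs : ∀ s ∈ K, Tendsto (fun n => dInfty ((Zop f ρ)^[n] (fdelta s)) ux) atTop (nhds 0) := by
    intro s hs
    have hδ := isFuzzyStar_fdelta s
    have hδK : {z | 0 < fdelta s z} ⊆ K := by rw [setOf_pos_fdelta]; exact singleton_subset_iff.2 hs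
    refine squeeze_zero (fun n => dInfty_nonneg_s6 _ _) (fun n =>
      ((isFuzzyStar_iterate_Zop hδ hcont hρ n).dInfty_triangle
        (isFuzzyStar_iterate_Zop hr hcont hρ n) ux).trans
      (add_le_add_left (dInfty_iterate_Zop_le hcont hρ hC0 hK hLip hδ hr hδK hrK n) _)) ?_
    simpa using ((tendsto_pow_atTop_nhds_zero_of_lt_one hC0 hC1).mul_const _).add hux
  exact ⟨hδs, hδs x (subset_closure hxw)⟩

/-- Proposition 3.1: for every `s ∈ cl(O(w_x))`,
`Z^[n](δ_s) → u_x = lim_n Z^[n](u^x)`. -/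
theorem stmt6 {X I : Type*} [MetricSpace X] [CompleteSpace X] [DecidableEq X]
    [Finite I] [Nonempty I]
    (f : I → X → X) (hcont : ∀ i, Continuous (f i))
    (C : ℝ) (hC0 : 0 ≤ C) (hC1 : C < 1) (horb : OrbitalContr f C)
    (ρ : I → ℝ → ℝ) (hρ : Admissible ρ)
    (u : X → ℝ) (hu : InFS f u)
    (x : X) (hx : 0 < u x)
    (wx yx : X) (hxw : x ∈ orbitIFS f wx) (hyw : yx ∈ orbitIFS f wx) (hy1 : u yx = 1)
    (ux : X → ℝ)
    (hux : Tendsto (fun n => dInfty ((Zop f ρ)^[n] (restrictO f u wx)) ux) atTop (nhds 0)) :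
    (∀ s ∈ closure (orbitIFS f wx),
      Tendsto (fun n => dInfty ((Zop f ρ)^[n] (fdelta s)) ux) atTop (nhds 0)) ∧
    Tendsto (fun n => dInfty ((Zop f ρ)^[n] (fdelta x)) ux) atTop (nhds 0) :=
  stmt6_general f hcont C hC0 hC1 horb ρ hρ u hu x wx yx hxw hyw hy1 ux hux
end
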